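/- Let G = ⟨a, b, c ∣ a²b = ba², ...⟩ be the presented group B₂(Σ₁,₀), with projection p : G → W and weight homomorphisms ℓ_â, ℓ_b̂ as above. Then g, h ∈ G are conjugate in G if and only if ℓ_â(g) = ℓ_â(h), ℓ_b̂(g) = ℓ_b̂(h), and p(g), p(h) are conjugate in W. -/

import Mathlib

/-- Relations of the presentation `⟨a,b,c ∣ a²b=ba², b²a=ab², a²c=ca², b²c=cb², a²b²=c²⟩`
of the braid group `B₂(Σ_{1,0})`, as elements of the free group on `a = 0`, `b = 1`, `c = 2`. -/
def grels : Set (FreeGroup (Fin 3)) :=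
  { FreeGroup.of 0 ^ 2 * FreeGroup.of 1 * (FreeGroup.of 1 * FreeGroup.of 0 ^ 2)⁻¹,
    FreeGroup.of 1 ^ 2 * FreeGroup.of 0 * (FreeGroup.of 0 * FreeGroup.of 1 ^ 2)⁻¹,
    FreeGroup.of 0 ^ 2 * FreeGroup.of 2 * (FreeGroup.of 2 * FreeGroup.of 0 ^ 2)⁻¹,
    FreeGroup.of 1 ^ 2 * FreeGroup.of 2 * (FreeGroup.of 2 * FreeGroup.of 1 ^ 2)⁻¹,
    FreeGroup.of 0 ^ 2 * FreeGroup.of 1 ^ 2 * (FreeGroup.of 2 ^ 2)⁻¹ }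

/-- Relations `a² = b² = c² = 1` of the universal Coxeter group `W(a,b,c)`. -/
def wrels : Set (FreeGroup (Fin 3)) :=
  { FreeGroup.of 0 ^ 2, FreeGroup.of 1 ^ 2, FreeGroup.of 2 ^ 2 }

/-- The braid group `B₂(Σ_{1,0})` via the presentation above. -/
abbrev G := PresentedGroup grels

/-- The universal Coxeter group `W(a,b,c) = ℤ/2 * ℤ/2 * ℤ/2`. -/
abbrev W := PresentedGroup wrels

def ga : G := PresentedGroup.of 0
def gb : G := PresentedGroup.of 1
def gc : G := PresentedGroup.of 2
def wa : W := PresentedGroup.of 0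
def wb : W := PresentedGroup.of 1
def wc : W := PresentedGroup.of 2

/-! The squares `a²`, `b²` are central and `c² = a²b²`, so `G ⧸ ⟨a², b²⟩` satisfies the relations
of `W` and the quotient map factors through `p`. Hence every element of `ker p` has the form
`a^{2m} b^{2n}`, and then `ℓ_â` reads off `n` and `ℓ_b̂` reads off `m`: the triple `(ℓ_â, ℓ_b̂, p)`
is injective on `G`. As `p` is onto, a lift `x` of an element conjugating `p g` to `p h` gives
`x g x⁻¹` with the same three invariants as `h`, hence equal to `h`. -/

theorem PresentedGroup.mem_center_of_forall_commute {α : Type*} {rels : Set (FreeGroup α)}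
    {z : PresentedGroup rels} (h : ∀ i, Commute (PresentedGroup.of i) z) :
    z ∈ Subgroup.center (PresentedGroup rels) := by
  have hz : z ∈ Subgroup.centralizer (Set.range PresentedGroup.of) := by
    rintro _ ⟨i, rfl⟩
    exact (h i).eq
  rwa [← Subgroup.centralizer_closure, PresentedGroup.closure_range_of, Subgroup.coe_top,
    Subgroup.centralizer_univ] at hz

theorem PresentedGroup.surjective_of_forall_of_mem_range {α H : Type*} [Group H]
    {rels : Set (FreeGroup α)} {f : H →* PresentedGroup rels}
    (h : ∀ i, PresentedGroup.of i ∈ f.range) : Function.Surjective f :=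
  fun x => PresentedGroup.generated_by rels f.range h x

theorem Subgroup.normal_of_le_center {M : Type*} [Group M] {H : Subgroup M}
    (h : H ≤ Subgroup.center M) : H.Normal :=
  ⟨fun n hn g => by rwa [Subgroup.mem_center_iff.mp (h hn) g, mul_inv_cancel_right]⟩

namespace BraidTorus

theorem ga_sq_mul_gb : ga ^ 2 * gb = gb * ga ^ 2 :=
  PresentedGroup.mk_eq_mk_of_mul_inv_mem (by simp [grels])

theorem gb_sq_mul_ga : gb ^ 2 * ga = ga * gb ^ 2 :=
  PresentedGroup.mk_eq_mk_of_mul_inv_mem (by simp [grels])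

theorem ga_sq_mul_gc : ga ^ 2 * gc = gc * ga ^ 2 :=
  PresentedGroup.mk_eq_mk_of_mul_inv_mem (by simp [grels])

theorem gb_sq_mul_gc : gb ^ 2 * gc = gc * gb ^ 2 :=
  PresentedGroup.mk_eq_mk_of_mul_inv_mem (by simp [grels])

theorem ga_sq_mul_gb_sq : ga ^ 2 * gb ^ 2 = gc ^ 2 :=
  PresentedGroup.mk_eq_mk_of_mul_inv_mem (by simp [grels])

theorem ga_sq_mem_center : ga ^ 2 ∈ Subgroup.center G :=
  PresentedGroup.mem_center_of_forall_commute fun i => by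
    fin_cases i
    exacts [Commute.self_pow ga 2, ga_sq_mul_gb.symm, ga_sq_mul_gc.symm]

theorem gb_sq_mem_center : gb ^ 2 ∈ Subgroup.center G :=
  PresentedGroup.mem_center_of_forall_commute fun i => by
    fin_cases i
    exacts [gb_sq_mul_ga.symm, Commute.self_pow gb 2, gb_sq_mul_gc.symm]

def sqLattice : Multiplicative ℤ × Multiplicative ℤ →* G :=
  (zpowersHom G (ga ^ 2)).noncommCoprod (zpowersHom G (gb ^ 2)) fun _ _ =>
    Commute.zpow_zpow (Subgroup.mem_center_iff.mp gb_sq_mem_center (ga ^ 2)) _ _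

theorem sqLattice_apply (m n : Multiplicative ℤ) :
    sqLattice (m, n) = (ga ^ 2) ^ m.toAdd * (gb ^ 2) ^ n.toAdd :=
  rfl

theorem range_sqLattice_le_center : sqLattice.range ≤ Subgroup.center G := by
  rintro _ ⟨⟨m, n⟩, rfl⟩
  exact mul_mem (zpow_mem ga_sq_mem_center _) (zpow_mem gb_sq_mem_center _)

instance : sqLattice.range.Normal :=
  Subgroup.normal_of_le_center range_sqLattice_le_center

theorem of_sq_mem_range_sqLattice (i : Fin 3) :
    (PresentedGroup.of i : G) ^ 2 ∈ sqLattice.range := by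
  fin_cases i
  · exact ⟨(Multiplicative.ofAdd 1, 1), by simp [sqLattice_apply, ga]⟩
  · exact ⟨(1, Multiplicative.ofAdd 1), by simp [sqLattice_apply, gb]⟩
  · exact ⟨(Multiplicative.ofAdd 1, Multiplicative.ofAdd 1), by
      simpa [sqLattice_apply, gc] using ga_sq_mul_gb_sq⟩

def toQuotient : W →* G ⧸ sqLattice.range :=
  PresentedGroup.toGroup (f := fun i => ((PresentedGroup.of i : G) : G ⧸ sqLattice.range)) <| by
    simp only [wrels, Set.mem_insert_iff, Set.mem_singleton_iff]
    rintro _ (rfl | rfl | rfl) <;>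
      simpa [← QuotientGroup.mk_pow] using of_sq_mem_range_sqLattice _

theorem ker_le_range_sqLattice (p : G →* W)
    (hp : ∀ i, p (PresentedGroup.of i) = PresentedGroup.of i) : p.ker ≤ sqLattice.range := by
  have hcomp : toQuotient.comp p = QuotientGroup.mk' sqLattice.range :=
    PresentedGroup.ext fun i => by simp [hp, toQuotient]
  intro g hg
  rw [← QuotientGroup.eq_one_iff, ← QuotientGroup.mk'_apply, ← hcomp, MonoidHom.comp_apply,
    MonoidHom.mem_ker.mp hg, map_one]

theorem eq_one_of_mem_range_sqLattice (ℓa ℓb : G →* Multiplicative ℤ)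
    (ha0 : ℓa ga = Multiplicative.ofAdd 0) (ha1 : ℓa gb = Multiplicative.ofAdd 1)
    (hb1 : ℓb ga = Multiplicative.ofAdd 1)
    {g : G} (hg : g ∈ sqLattice.range) (ha : ℓa g = 1) (hb : ℓb g = 1) : g = 1 := by
  obtain ⟨⟨m, n⟩, rfl⟩ := hg
  obtain rfl : n = 1 := by simpa [sqLattice_apply, ha0, ha1] using ha
  obtain rfl : m = 1 := by simpa [sqLattice_apply, hb1] using hb
  rw [Prod.mk_one_one, map_one]

theorem eq_of_map_eq (p : G →* W) (hp : ∀ i, p (PresentedGroup.of i) = PresentedGroup.of i)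
    (ℓa ℓb : G →* Multiplicative ℤ)
    (ha0 : ℓa ga = Multiplicative.ofAdd 0) (ha1 : ℓa gb = Multiplicative.ofAdd 1)
    (hb1 : ℓb ga = Multiplicative.ofAdd 1)
    {g h : G} (ea : ℓa g = ℓa h) (eb : ℓb g = ℓb h) (ep : p g = p h) : g = h := by
  rw [← mul_inv_eq_one] at ea eb ep ⊢
  rw [← map_inv, ← map_mul] at ea eb ep
  exact eq_one_of_mem_range_sqLattice ℓa ℓb ha0 ha1 hb1 (ker_le_range_sqLattice p hp ep) ea eb

end BraidTorus

theorem stmt_15_general (p : G →* W) (hpa : p ga = wa) (hpb : p gb = wb) (hpc : p gc = wc)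
    (ℓa ℓb : G →* Multiplicative ℤ)
    (ha0 : ℓa ga = Multiplicative.ofAdd 0) (ha1 : ℓa gb = Multiplicative.ofAdd 1)
    (hb1 : ℓb ga = Multiplicative.ofAdd 1)
    (g h : G) :
    IsConj g h ↔ ℓa g = ℓa h ∧ ℓb g = ℓb h ∧ IsConj (p g) (p h) := by
  have hp : ∀ i, p (PresentedGroup.of i) = PresentedGroup.of i := by
    intro i
    fin_cases i
    exacts [hpa, hpb, hpc]
  refine ⟨fun hgh => ⟨isConj_iff_eq.mp (ℓa.map_isConj hgh),
    isConj_iff_eq.mp (ℓb.map_isConj hgh), p.map_isConj hgh⟩, ?_⟩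
  rintro ⟨ea, eb, hconj⟩
  obtain ⟨w, hw⟩ := isConj_iff.mp hconj
  obtain ⟨x, rfl⟩ := PresentedGroup.surjective_of_forall_of_mem_range (fun i => ⟨_, hp i⟩) w
  refine isConj_iff.mpr ⟨x, BraidTorus.eq_of_map_eq p hp ℓa ℓb ha0 ha1 hb1 ?_ ?_ ?_⟩ <;>
    simpa [mul_inv_cancel_comm]

theorem stmt_15 (p : G →* W) (hpa : p ga = wa) (hpb : p gb = wb) (hpc : p gc = wc)
    (ℓa ℓb : G →* Multiplicative ℤ)
    (ha0 : ℓa ga = Multiplicative.ofAdd 0) (ha1 : ℓa gb = Multiplicative.ofAdd 1)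
    (ha2 : ℓa gc = Multiplicative.ofAdd 1)
    (hb0 : ℓb gb = Multiplicative.ofAdd 0) (hb1 : ℓb ga = Multiplicative.ofAdd 1)
    (hb2 : ℓb gc = Multiplicative.ofAdd 1) (g h : G) :
    IsConj g h ↔ ℓa g = ℓa h ∧ ℓb g = ℓb h ∧ IsConj (p g) (p h) :=
  stmt_15_general p hpa hpb hpc ℓa ℓb ha0 ha1 hb1 g h
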